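/- arXiv:2409.15891 — 13 statements merged into one kernel-verified Lean document; each statement's English description precedes it below -/
import Mathlib

section
/- There do not exist real coefficients α₁, α₂, α₃, α₁₂, α₁₃, α₂₃ and a real number E such that the quadratic pseudo-Boolean polynomial f(x₁,x₂,x₃) = α₁x₁ + α₂x₂ + α₃x₃ + α₁₂x₁x₂ + α₁₃x₁x₃ + α₂₃x₂x₃ satisfies f(s) = -E for all seven assignments s ∈ {0,1}³ satisfying the clause (x₁ ∨ x₂ ∨ x₃), and f(0,0,0) > -E. -/
theorem stmt_0 :
    ¬ ∃ (a1 a2 a3 a12 a13 a23 E : ℝ),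
      (∀ x1 x2 x3 : ℝ, (x1 = 0 ∨ x1 = 1) → (x2 = 0 ∨ x2 = 1) → (x3 = 0 ∨ x3 = 1) →
        (x1 = 1 ∨ x2 = 1 ∨ x3 = 1) →
        a1*x1 + a2*x2 + a3*x3 + a12*x1*x2 + a13*x1*x3 + a23*x2*x3 = -E) ∧
      a1*0 + a2*0 + a3*0 + a12*0*0 + a13*0*0 + a23*0*0 > -E := by
  rintro ⟨a1, a2, a3, a12, a13, a23, E, h, h0⟩
  have h100 := h 1 0 0 (Or.inr rfl) (Or.inl rfl) (Or.inl rfl) (Or.inl rfl)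
  have h010 := h 0 1 0 (Or.inl rfl) (Or.inr rfl) (Or.inl rfl) (Or.inr (Or.inl rfl))
  have h001 := h 0 0 1 (Or.inl rfl) (Or.inl rfl) (Or.inr rfl) (Or.inr (Or.inr rfl))
  have h110 := h 1 1 0 (Or.inr rfl) (Or.inr rfl) (Or.inl rfl) (Or.inl rfl)
  have h101 := h 1 0 1 (Or.inr rfl) (Or.inl rfl) (Or.inr rfl) (Or.inl rfl)
  have h011 := h 0 1 1 (Or.inl rfl) (Or.inr rfl) (Or.inr rfl) (Or.inr (Or.inl rfl))
  have h111 := h 1 1 1 (Or.inr rfl) (Or.inr rfl) (Or.inr rfl) (Or.inl rfl)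
  nlinarith [h100, h010, h001, h110, h101, h011, h111, h0]
end

section
/- There do not exist real coefficients α₁, α₂, α₃, α₁₂, α₁₃, α₂₃ and a real number E such that the quadratic pseudo-Boolean polynomial f(x₁,x₂,x₃) = α₁x₁ + α₂x₂ + α₃x₃ + α₁₂x₁x₂ + α₁₃x₁x₃ + α₂₃x₂x₃ satisfies f(s) = -E for all seven assignments s ∈ {0,1}³ with ¬(x₁=0 ∧ x₂=0 ∧ x₃=1), and f(0,0,1) > -E. -/
theorem stmt_1 :
    ¬ ∃ (a1 a2 a3 a12 a13 a23 E : ℝ),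
      (∀ x1 x2 x3 : ℝ, (x1 = 0 ∨ x1 = 1) → (x2 = 0 ∨ x2 = 1) → (x3 = 0 ∨ x3 = 1) →
        ¬ (x1 = 0 ∧ x2 = 0 ∧ x3 = 1) →
        a1*x1 + a2*x2 + a3*x3 + a12*x1*x2 + a13*x1*x3 + a23*x2*x3 = -E) ∧
      a1*0 + a2*0 + a3*1 + a12*0*0 + a13*0*1 + a23*0*1 > -E := by
  rintro ⟨a1, a2, a3, a12, a13, a23, E, h, hgt⟩
  have h000 := h 0 0 0 (Or.inl rfl) (Or.inl rfl) (Or.inl rfl) (by simp)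
  have h100 := h 1 0 0 (Or.inr rfl) (Or.inl rfl) (Or.inl rfl) (by norm_num)
  have h010 := h 0 1 0 (Or.inl rfl) (Or.inr rfl) (Or.inl rfl) (by norm_num)
  have h101 := h 1 0 1 (Or.inr rfl) (Or.inl rfl) (Or.inr rfl) (by norm_num)
  have h011 := h 0 1 1 (Or.inl rfl) (Or.inr rfl) (Or.inr rfl) (by norm_num)
  have h110 := h 1 1 0 (Or.inr rfl) (Or.inr rfl) (Or.inl rfl) (by norm_num)
  have h111 := h 1 1 1 (Or.inr rfl) (Or.inr rfl) (Or.inr rfl) (by norm_num)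
  norm_num at *
  linarith
end

section
/- There do not exist real coefficients α₁, α₂, α₃, α₁₂, α₁₃, α₂₃ and a real number E such that f(x₁,x₂,x₃) = α₁x₁ + α₂x₂ + α₃x₃ + α₁₂x₁x₂ + α₁₃x₁x₃ + α₂₃x₂x₃ takes the value -E on all seven assignments in {0,1}³ satisfying the clause (¬x₁ ∨ ¬x₂ ∨ ¬x₃) and a value strictly greater than -E on (1,1,1). -/
theorem stmt_2 :
    ¬ ∃ (a1 a2 a3 a12 a13 a23 E : ℝ),
      (∀ x1 x2 x3 : ℝ, (x1 = 0 ∨ x1 = 1) → (x2 = 0 ∨ x2 = 1) → (x3 = 0 ∨ x3 = 1) →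
        ¬ (x1 = 1 ∧ x2 = 1 ∧ x3 = 1) →
        a1*x1 + a2*x2 + a3*x3 + a12*x1*x2 + a13*x1*x3 + a23*x2*x3 = -E) ∧
      a1*1 + a2*1 + a3*1 + a12*1*1 + a13*1*1 + a23*1*1 > -E := by
  rintro ⟨a1, a2, a3, a12, a13, a23, E, h, hgt⟩
  have h000 := h 0 0 0 (Or.inl rfl) (Or.inl rfl) (Or.inl rfl) (by norm_num)
  have h100 := h 1 0 0 (Or.inr rfl) (Or.inl rfl) (Or.inl rfl) (by norm_num)
  have h010 := h 0 1 0 (Or.inl rfl) (Or.inr rfl) (Or.inl rfl) (by norm_num)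
  have h001 := h 0 0 1 (Or.inl rfl) (Or.inl rfl) (Or.inr rfl) (by norm_num)
  have h110 := h 1 1 0 (Or.inr rfl) (Or.inr rfl) (Or.inl rfl) (by norm_num)
  have h101 := h 1 0 1 (Or.inr rfl) (Or.inl rfl) (Or.inr rfl) (by norm_num)
  have h011 := h 0 1 1 (Or.inl rfl) (Or.inr rfl) (Or.inr rfl) (by norm_num)
  norm_num at *
  linarith
end

section
/- Define g(x₁,x₂,x₃,a) = -2x₁ - 2x₂ - 2x₃ - 2a + x₁x₂ + x₁x₃ + x₂x₃ + x₁a + x₂a + x₃a for (x₁,x₂,x₃,a) ∈ {0,1}⁴, and let E(x₁,x₂,x₃) = min over a ∈ {0,1} of g(x₁,x₂,x₃,a). Then E(x₁,x₂,x₃) = -3 if (x₁,x₂,x₃) satisfies the clause (x₁ ∨ x₂ ∨ x₃), and E(0,0,0) > -3. -/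
theorem stmt_7 :
    let g : ℝ → ℝ → ℝ → ℝ → ℝ := fun x1 x2 x3 a =>
      -2*x1 - 2*x2 - 2*x3 - 2*a + x1*x2 + x1*x3 + x2*x3 + x1*a + x2*a + x3*a
    let E : ℝ → ℝ → ℝ → ℝ := fun x1 x2 x3 => min (g x1 x2 x3 0) (g x1 x2 x3 1)
    (∀ x1 x2 x3 : ℝ, (x1 = 0 ∨ x1 = 1) → (x2 = 0 ∨ x2 = 1) → (x3 = 0 ∨ x3 = 1) →
      (x1 = 1 ∨ x2 = 1 ∨ x3 = 1) → E x1 x2 x3 = -3) ∧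
    E 0 0 0 > -3 := by
  constructor
  · intro x1 x2 x3 h1 h2 h3 hs
    rcases h1 with h1 | h1 <;> rcases h2 with h2 | h2 <;> rcases h3 with h3 | h3 <;>
      subst h1 <;> subst h2 <;> subst h3 <;> simp_all <;> norm_num [min_def]
  · norm_num [min_def]
end

section
/- Define g(a,b,c,K) = 2ab - 2aK - 2bK - c + cK + K for (a,b,c,K) ∈ {0,1}⁴, and let E(a,b,c) = min over K ∈ {0,1} of g. Then there is a constant m such that E(a,b,c) = m for all seven assignments (a,b,c) satisfying the clause (a ∨ b ∨ c), and E(0,0,0) > m. -/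
theorem stmt_9 :
    let g : ℝ → ℝ → ℝ → ℝ → ℝ := fun a b c K =>
      2*a*b - 2*a*K - 2*b*K - c + c*K + K
    let E : ℝ → ℝ → ℝ → ℝ := fun a b c => min (g a b c 0) (g a b c 1)
    ∃ m : ℝ,
      (∀ a b c : ℝ, (a = 0 ∨ a = 1) → (b = 0 ∨ b = 1) → (c = 0 ∨ c = 1) →
        (a = 1 ∨ b = 1 ∨ c = 1) → E a b c = m) ∧
      E 0 0 0 > m := by
  intro g E
  refine ⟨-1, ?_, by norm_num [E, g, min_def]⟩
  rintro a b c (rfl|rfl) (rfl|rfl) (rfl|rfl) h <;>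
    simp only [E, g] <;> norm_num [min_def] <;> norm_num at *
end

section
/- Define g(a,b,c,K) = 2ab - 2aK - 2bK + c - cK + 2K for (a,b,c,K) ∈ {0,1}⁴, and let E(a,b,c) = min over K ∈ {0,1} of g. Then there is a constant m such that E(a,b,c) = m for all seven assignments satisfying the clause (a ∨ b ∨ ¬c), and E(0,0,1) > m. -/
theorem stmt_10 :
    let g : ℝ → ℝ → ℝ → ℝ → ℝ := fun a b c K =>
      2*a*b - 2*a*K - 2*b*K + c - c*K + 2*K
    let E : ℝ → ℝ → ℝ → ℝ := fun a b c => min (g a b c 0) (g a b c 1)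
    ∃ m : ℝ,
      (∀ a b c : ℝ, (a = 0 ∨ a = 1) → (b = 0 ∨ b = 1) → (c = 0 ∨ c = 1) →
        (a = 1 ∨ b = 1 ∨ c = 0) → E a b c = m) ∧
      E 0 0 1 > m := by
  intro g E
  use 0
  constructor
  · rintro a b c (rfl|rfl) (rfl|rfl) (rfl|rfl) h <;>
      simp_all [E, g, min_def] <;> norm_num
  · norm_num [E, g, min_def]
end

section
/- Define g(a,b,c,K) = 2a - 2ab - 2aK + 2bK + c - cK for (a,b,c,K) ∈ {0,1}⁴, and let E(a,b,c) = min over K ∈ {0,1} of g. Then there is a constant m such that E(a,b,c) = m for all seven assignments satisfying the clause (a ∨ ¬b ∨ ¬c), and E(0,1,1) > m. -/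
theorem stmt_11 :
    let g : ℝ → ℝ → ℝ → ℝ → ℝ := fun a b c K =>
      2*a - 2*a*b - 2*a*K + 2*b*K + c - c*K
    let E : ℝ → ℝ → ℝ → ℝ := fun a b c => min (g a b c 0) (g a b c 1)
    ∃ m : ℝ,
      (∀ a b c : ℝ, (a = 0 ∨ a = 1) → (b = 0 ∨ b = 1) → (c = 0 ∨ c = 1) →
        (a = 1 ∨ b = 0 ∨ c = 0) → E a b c = m) ∧
      E 0 1 1 > m := by
  intro g E
  refine ⟨0, ?_, ?_⟩
  · rintro a b c (rfl|rfl) (rfl|rfl) (rfl|rfl) h <;>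
      simp_all [E, g, min_def] <;> norm_num
  · norm_num [E, g, min_def]
end

section
/- Define g(a,b,c,K) = -a - b - c - K + ab + ac + bc + aK + bK + cK for (a,b,c,K) ∈ {0,1}⁴, and let E(a,b,c) = min over K ∈ {0,1} of g. Then E(a,b,c) = -1 whenever (a,b,c) ≠ (1,1,1), and E(1,1,1) > -1. -/
theorem stmt_12 :
    let g : ℝ → ℝ → ℝ → ℝ → ℝ := fun a b c K =>
      -a - b - c - K + a*b + a*c + b*c + a*K + b*K + c*K
    let E : ℝ → ℝ → ℝ → ℝ := fun a b c => min (g a b c 0) (g a b c 1)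
    (∀ a b c : ℝ, (a = 0 ∨ a = 1) → (b = 0 ∨ b = 1) → (c = 0 ∨ c = 1) →
      ¬ (a = 1 ∧ b = 1 ∧ c = 1) → E a b c = -1) ∧
    E 1 1 1 > -1 := by
  refine ⟨fun a b c ha hb hc h => ?_, by norm_num⟩
  rcases ha with rfl|rfl <;> rcases hb with rfl|rfl <;> rcases hc with rfl|rfl <;>
    simp_all <;> norm_num
end

section
/- Define the quadratic function f(x_i,x_j,x_k) = -x_i - x_j - x_k + x_i x_j + x_i x_k + x_j x_k on {0,1}³. Then its minimum value is -1, exactly six of the seven assignments satisfying the clause (x_i ∨ x_j ∨ x_k) attain this minimum, and both the non-satisfying assignment (0,0,0) and the satisfying assignment (1,1,1) have strictly larger value. -/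
def bv : Bool → ℝ := fun x => if x then 1 else 0

theorem stmt_13 :
    let F : Bool × Bool × Bool → ℝ := fun p =>
      -(bv p.1) - bv p.2.1 - bv p.2.2 + bv p.1 * bv p.2.1
        + bv p.1 * bv p.2.2 + bv p.2.1 * bv p.2.2
    (∀ p, -1 ≤ F p) ∧
    ({p : Bool × Bool × Bool | F p = -1}.ncard = 6) ∧
    (∀ p : Bool × Bool × Bool, F p = -1 → (p.1 = true ∨ p.2.1 = true ∨ p.2.2 = true)) ∧
    F (false, false, false) > -1 ∧
    F (true, true, true) > -1 := by
  intro F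
  have hF : ∀ p : Bool × Bool × Bool, F p =
      if p = (false,false,false) then 0 else if p = (true,true,true) then 0 else -1 := by
    rintro ⟨a, b, c⟩
    cases a <;> cases b <;> cases c <;> simp [F, bv] <;> norm_num
  have hset : {p : Bool × Bool × Bool | F p = -1} =
      ↑({(true,false,false),(false,true,false),(false,false,true),
        (true,true,false),(true,false,true),(false,true,true)} : Finset (Bool × Bool × Bool)) := by
    ext ⟨a, b, c⟩
    cases a <;> cases b <;> cases c <;> simp [hF] <;> norm_num
  refine ⟨?_, ?_, ?_, ?_, ?_⟩
  · rintro ⟨a, b, c⟩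
    cases a <;> cases b <;> cases c <;> simp [F, bv] <;> norm_num
  · rw [hset, Set.ncard_coe_finset]; decide
  · rintro ⟨a, b, c⟩ h
    cases a <;> cases b <;> cases c <;> simp_all [hF] <;> norm_num at h
  · norm_num [F, bv]
  · norm_num [F, bv]
end

section
/- Define f(x_i,x_j,x_k) = x_i x_j - x_i x_k - x_j x_k + x_k on {0,1}³. Then the set of assignments on which f attains its minimum value consists of exactly six assignments, all of which satisfy the clause (x_i ∨ x_j ∨ ¬x_k), and the non-satisfying assignment (0,0,1) does not attain the minimum. -/
theorem stmt_14 :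
    let F : Bool × Bool × Bool → ℝ := fun p =>
      let xi := bv p.1; let xj := bv p.2.1; let xk := bv p.2.2
      xi*xj - xi*xk - xj*xk + xk
    let M : Set (Bool × Bool × Bool) := {p | ∀ q, F p ≤ F q}
    M.ncard = 6 ∧
    (∀ p ∈ M, p.1 = true ∨ p.2.1 = true ∨ p.2.2 = false) ∧
    (false, false, true) ∉ M := by
  intro F M
  have hnn : ∀ q, (0:ℝ) ≤ F q := by
    rintro ⟨a, b, c⟩
    rcases a <;> rcases b <;> rcases c <;> simp [F, bv] <;> norm_num
  have hmem : ∀ p, p ∈ M ↔ F p = 0 := by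
    intro p
    constructor
    · intro hp
      have h1 := hp (false, false, false)
      have h2 : F (false, false, false) = 0 := by simp [F, bv]
      have := hnn p
      linarith
    · intro hp q
      rw [hp]; exact hnn q
  have hM : M = ↑({(false,false,false),(true,false,false),(false,true,false),
      (false,true,true),(true,false,true),(true,true,true)} :
      Finset (Bool × Bool × Bool)) := by
    ext ⟨a, b, c⟩
    rw [hmem]
    rcases a <;> rcases b <;> rcases c <;> simp [F, bv] <;> norm_num
  refine ⟨?_, ?_, ?_⟩
  · rw [hM, Set.ncard_coe_finset]; decide
  · intro p hp
    rw [hM, Finset.mem_coe] at hp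
    fin_cases hp <;> simp
  · rw [hM]; decide
end

section
/- Define f(x_i,x_j,x_k) = x_i - x_i x_j - x_i x_k + x_j x_k on {0,1}³. Then exactly six assignments attain the minimum value of f, all six satisfy the clause (x_i ∨ ¬x_j ∨ ¬x_k), and the non-satisfying assignment (0,1,1) does not attain the minimum. -/
theorem stmt_15 :
    let F : Bool × Bool × Bool → ℝ := fun p =>
      let xi := bv p.1; let xj := bv p.2.1; let xk := bv p.2.2
      xi - xi*xj - xi*xk + xj*xk
    let M : Set (Bool × Bool × Bool) := {p | ∀ q, F p ≤ F q}
    M.ncard = 6 ∧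
    (∀ p ∈ M, p.1 = true ∨ p.2.1 = false ∨ p.2.2 = false) ∧
    (false, true, true) ∉ M := by
  intro F M
  have hF : ∀ p, F p = 0 ∨ F p = 1 := by
    rintro ⟨a, b, c⟩
    rcases a <;> rcases b <;> rcases c <;> simp [F, bv] <;> norm_num
  have hM : M = {(false,false,false),(false,false,true),(false,true,false),
      (true,false,true),(true,true,false),(true,true,true)} := by
    ext ⟨a, b, c⟩
    constructor
    · intro h
      have h0 := h (false,false,false)
      rcases a <;> rcases b <;> rcases c <;> simp_all [F, bv] <;> norm_num at h0
    · intro h q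
      simp only [Set.mem_insert_iff, Set.mem_singleton_iff, Prod.mk.injEq] at h
      have h0 : F (a, b, c) = 0 := by
        rcases h with ⟨ha,hb,hc⟩|⟨ha,hb,hc⟩|⟨ha,hb,hc⟩|⟨ha,hb,hc⟩|⟨ha,hb,hc⟩|⟨ha,hb,hc⟩ <;>
          subst ha <;> subst hb <;> subst hc <;> simp [F, bv]
      rw [h0]
      rcases hF q with hq | hq <;> rw [hq] <;> norm_num
  refine ⟨?_, ?_, ?_⟩
  · rw [hM]
    rw [Set.ncard_eq_toFinset_card']
    decide
  · intro p hp
    rw [hM] at hp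
    rcases p with ⟨a, b, c⟩
    rcases a <;> rcases b <;> rcases c <;> simp_all
  · rw [hM]; simp
end

section
/- Define f(x_i,x_j,x_k) = -x_i - x_j - x_k + x_i x_j + x_i x_k + x_j x_k on {0,1}³. Then exactly six assignments attain the minimum of f, all six satisfy the clause (¬x_i ∨ ¬x_j ∨ ¬x_k), and the non-satisfying assignment (1,1,1) does not attain the minimum. -/
theorem stmt_16 :
    let F : Bool × Bool × Bool → ℝ := fun p =>
      -(bv p.1) - bv p.2.1 - bv p.2.2 + bv p.1 * bv p.2.1
        + bv p.1 * bv p.2.2 + bv p.2.1 * bv p.2.2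
    let M : Set (Bool × Bool × Bool) := {p | ∀ q, F p ≤ F q}
    M.ncard = 6 ∧
    (∀ p ∈ M, p.1 = false ∨ p.2.1 = false ∨ p.2.2 = false) ∧
    (true, true, true) ∉ M := by
  intro F M
  have hlb : ∀ q, (-1 : ℝ) ≤ F q := by
    rintro ⟨x, y, z⟩
    cases x <;> cases y <;> cases z <;> norm_num [F, bv]
  have hM : M = ↑({(false,false,true),(false,true,false),(true,false,false),
      (false,true,true),(true,false,true),(true,true,false)} :
      Finset (Bool × Bool × Bool)) := by
    ext ⟨a, b, c⟩
    constructor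
    · intro h
      cases a <;> cases b <;> cases c <;>
        first
          | (rw [Finset.mem_coe]; decide)
          | (exfalso; have h1 := h (true, false, false); norm_num [F, bv] at h1)
    · intro h q
      refine le_trans ?_ (hlb q)
      rw [Finset.mem_coe] at h
      fin_cases h <;> norm_num [F, bv]
  refine ⟨?_, ?_, ?_⟩
  · rw [hM, Set.ncard_coe_finset]; decide
  · intro p hp
    rw [hM] at hp
    simp only [Finset.coe_insert, Set.mem_insert_iff, Finset.coe_singleton,
      Set.mem_singleton_iff] at hp
    rcases hp with h|h|h|h|h|h <;> subst h <;> simp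
  · rw [hM]; decide
end

section
/- For every satisfying assignment s ∈ {0,1}³ of the clause (x₁ ∨ x₂ ∨ x₃), there exist coefficients α₁, α₂, α₃, α₁₂, α₁₃, α₂₃ ∈ {-1,0,1} such that s minimizes f(x₁,x₂,x₃) = α₁x₁ + α₂x₂ + α₃x₃ + α₁₂x₁x₂ + α₁₃x₁x₃ + α₂₃x₂x₃ over {0,1}³, the set of minimizers of f has exactly six elements all of which satisfy the clause, and the non-satisfying assignment (0,0,0) is not a minimizer. -/
lemma aux_min (F : Bool × Bool × Bool → ℝ) (S : Finset (Bool × Bool × Bool))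
    (hS : ∀ p, p ∈ S ↔ F p = -1) (hmin : ∀ q, -1 ≤ F q)
    (p0 : Bool × Bool × Bool) (hp0 : p0 ∈ S) :
    {p | ∀ q, F p ≤ F q} = (↑S : Set (Bool × Bool × Bool)) := by
  ext p
  simp only [Set.mem_setOf_eq, Finset.coe_sort_coe, Finset.mem_coe]
  constructor
  · intro h
    rw [hS]
    have h1 := h p0
    rw [(hS p0).mp hp0] at h1
    linarith [hmin p]
  · intro h q
    rw [(hS p).mp h]
    exact hmin q

theorem stmt_17 (s : Bool × Bool × Bool)
    (hs : s.1 = true ∨ s.2.1 = true ∨ s.2.2 = true) :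
    ∃ a1 a2 a3 a12 a13 a23 : ℝ,
      a1 ∈ ({-1, 0, 1} : Set ℝ) ∧ a2 ∈ ({-1, 0, 1} : Set ℝ) ∧
      a3 ∈ ({-1, 0, 1} : Set ℝ) ∧ a12 ∈ ({-1, 0, 1} : Set ℝ) ∧
      a13 ∈ ({-1, 0, 1} : Set ℝ) ∧ a23 ∈ ({-1, 0, 1} : Set ℝ) ∧
      let F : Bool × Bool × Bool → ℝ := fun p =>
        let x1 := bv p.1; let x2 := bv p.2.1; let x3 := bv p.2.2
        a1*x1 + a2*x2 + a3*x3 + a12*x1*x2 + a13*x1*x3 + a23*x2*x3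
      let M : Set (Bool × Bool × Bool) := {p | ∀ q, F p ≤ F q}
      s ∈ M ∧ M.ncard = 6 ∧
      (∀ p ∈ M, p.1 = true ∨ p.2.1 = true ∨ p.2.2 = true) ∧
      (false, false, false) ∉ M := by
  by_cases hcase : s = (true, true, true)
  · -- coefficients 0, -1, -1, 0, 0, 1 ; minimizers: all except (f,f,f) and (t,f,f)
    refine ⟨0, -1, -1, 0, 0, 1, by simp, by simp, by simp, by simp, by simp, by simp, ?_⟩
    intro F M
    have hM : M = (↑({(true,true,true),(true,true,false),(true,false,true),
        (false,true,true),(false,true,false),(false,false,true)} :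
        Finset (Bool × Bool × Bool)) : Set (Bool × Bool × Bool)) := by
      refine aux_min _ _ ?_ ?_ (false, false, true) (by decide)
      · intro p
        rcases p with ⟨b1, b2, b3⟩
        cases b1 <;> cases b2 <;> cases b3 <;> simp [F, bv] <;> norm_num
      · intro q
        rcases q with ⟨b1, b2, b3⟩
        cases b1 <;> cases b2 <;> cases b3 <;> simp [F, bv] <;> norm_num
    rw [hM, Set.ncard_coe_finset]
    subst hcase
    refine ⟨?_, by decide, ?_, by decide⟩
    · decide
    · intro p hp; rw [Finset.mem_coe] at hp; fin_cases hp <;> simp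
  · -- coefficients -1,-1,-1,1,1,1 ; minimizers: all except (f,f,f) and (t,t,t)
    refine ⟨-1, -1, -1, 1, 1, 1, by simp, by simp, by simp, by simp, by simp, by simp, ?_⟩
    intro F M
    have hM : M = (↑({(true,true,false),(true,false,true),(true,false,false),
        (false,true,true),(false,true,false),(false,false,true)} :
        Finset (Bool × Bool × Bool)) : Set (Bool × Bool × Bool)) := by
      refine aux_min _ _ ?_ ?_ (false, false, true) (by decide)
      · intro p
        rcases p with ⟨b1, b2, b3⟩
        cases b1 <;> cases b2 <;> cases b3 <;> simp [F, bv] <;> norm_num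
      · intro q
        rcases q with ⟨b1, b2, b3⟩
        cases b1 <;> cases b2 <;> cases b3 <;> simp [F, bv] <;> norm_num
    rw [hM, Set.ncard_coe_finset]
    refine ⟨?_, by decide, ?_, by decide⟩
    · rcases s with ⟨b1, b2, b3⟩
      cases b1 <;> cases b2 <;> cases b3 <;> simp_all <;> decide
    · intro p hp; rw [Finset.mem_coe] at hp; fin_cases hp <;> simp
end
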